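/- For all g ≥ 3, the number n'_g of gapsets of genus g and depth at most 3 satisfies 2F_g ≤ n'_g ≤ T_{g+1}, where F_g is the g-th Fibonacci number (F_1 = F_2 = 1) and T_n is the n-th tribonacci number (T_0 = 0, T_1 = T_2 = 1, T_n = T_{n−1}+T_{n−2}+T_{n−3}). -/

import Mathlib

/-- A gapset: a finite set of positive integers such that whenever `z ∈ G`
decomposes as `z = x + y` with `x, y` positive, then `x ∈ G` or `y ∈ G`. -/
def IsGapset (G : Finset ℕ) : Prop :=
  (∀ g ∈ G, 0 < g) ∧
    ∀ z ∈ G, ∀ x y : ℕ, 0 < x → 0 < y → z = x + y → x ∈ G ∨ y ∈ G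

/-- The multiplicity: the smallest positive integer not in `G`. -/
noncomputable def gmult (G : Finset ℕ) : ℕ := sInf {m : ℕ | 0 < m ∧ m ∉ G}

/-- The conductor: `max G + 1` (and `0` if `G` is empty). -/
noncomputable def gcond (G : Finset ℕ) : ℕ := if h : G.Nonempty then G.max' h + 1 else 0

/-- The depth: `⌈conductor / multiplicity⌉`. -/
noncomputable def gdepth (G : Finset ℕ) : ℕ := (gcond G + gmult G - 1) / gmult G

/-- `n'_g`: the number of gapsets of genus `g` and depth at most 3. -/
noncomputable def n' (g : ℕ) : ℕ :=
  Nat.card {G : Finset ℕ // IsGapset G ∧ G.card = g ∧ gdepth G ≤ 3}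

/-- The tribonacci numbers. -/
def trib : ℕ → ℕ
  | 0 => 0
  | 1 => 1
  | 2 => 1
  | (n + 3) => trib (n + 2) + trib (n + 1) + trib n

set_option maxRecDepth 100000

def TriSet (g : ℕ) : Finset (ℕ × Finset ℕ × Finset ℕ) :=
  ((Finset.range (g+1)) ×ˢ (Finset.Icc 1 g).powerset ×ˢ (Finset.Icc 1 g).powerset).filter
    (fun t => t.2.2 ⊆ t.2.1 ∧ t.2.1 ⊆ Finset.Icc 1 t.1 ∧ t.1 + t.2.1.card + t.2.2.card = g)

lemma mem_TriSet {g : ℕ} {t : ℕ × Finset ℕ × Finset ℕ} :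
    t ∈ TriSet g ↔ t.2.2 ⊆ t.2.1 ∧ t.2.1 ⊆ Finset.Icc 1 t.1 ∧
      t.1 + t.2.1.card + t.2.2.card = g := by
  simp only [TriSet, Finset.mem_filter, Finset.mem_product, Finset.mem_powerset,
    Finset.mem_range]
  constructor
  · rintro ⟨_, h⟩; exact h
  · rintro ⟨h4, h5, h6⟩
    have hn : t.1 ≤ g := by omega
    have hA : t.2.1 ⊆ Finset.Icc 1 g := by
      intro x hx
      have := h5 hx
      simp only [Finset.mem_Icc] at this ⊢
      omega
    exact ⟨⟨by omega, hA, fun x hx => hA (h4 hx)⟩, h4, h5, h6⟩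

lemma n_pos_of_mem {g : ℕ} {t : ℕ × Finset ℕ × Finset ℕ} (ht : t ∈ TriSet g)
    (hg : 1 ≤ g) : 1 ≤ t.1 := by
  rw [mem_TriSet] at ht
  obtain ⟨h4, h5, h6⟩ := ht
  by_contra h
  have hn : t.1 = 0 := by omega
  have : t.2.1 = ∅ := by
    rw [← Finset.subset_empty]
    intro x hx
    have := h5 hx
    simp [hn] at this
  have hB : t.2.2 = ∅ := by
    rw [← Finset.subset_empty, ← this]; exact h4
  simp [hn, this, hB] at h6
  omega

lemma tri_card_rec (g : ℕ) (hg : 3 ≤ g) :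
    (TriSet g).card ≤ (TriSet (g-1)).card + (TriSet (g-2)).card + (TriSet (g-3)).card := by
  classical
  set s0 := (TriSet g).filter (fun t => t.1 ∉ t.2.1) with hs0
  set s1 := (TriSet g).filter (fun t => t.1 ∈ t.2.1 ∧ t.1 ∉ t.2.2) with hs1
  set s2 := (TriSet g).filter (fun t => t.1 ∈ t.2.2) with hs2
  have hcover : TriSet g ⊆ s0 ∪ s1 ∪ s2 := by
    intro t ht
    simp only [hs0, hs1, hs2, Finset.mem_union, Finset.mem_filter]
    by_cases h1 : t.1 ∈ t.2.1 <;> by_cases h2 : t.1 ∈ t.2.2 <;> tauto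
  have h0 : s0.card ≤ (TriSet (g-1)).card := by
    apply Finset.card_le_card_of_injOn (fun t => (t.1 - 1, t.2.1, t.2.2))
    · intro t ht
      simp only [hs0, Finset.mem_coe, Finset.mem_filter] at ht
      obtain ⟨ht, hna⟩ := ht
      have hn := n_pos_of_mem ht (by omega)
      rw [Finset.mem_coe]; rw [mem_TriSet] at ht ⊢
      dsimp only
      refine ⟨ht.1, ?_, ?_⟩
      · intro x hx
        have := ht.2.1 hx
        simp only [Finset.mem_Icc] at this ⊢
        have : x ≠ t.1 := fun h => hna (h ▸ hx)
        constructor <;> omega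
      · have := ht.2.2; omega
    · intro t ht t' ht' h
      simp only [hs0, Finset.mem_coe, Finset.mem_filter] at ht ht'
      have hn := n_pos_of_mem ht.1 (by omega)
      have hn' := n_pos_of_mem ht'.1 (by omega)
      simp only [Prod.mk.injEq] at h
      obtain ⟨e1, e2, e3⟩ := h
      have : t.1 = t'.1 := by omega
      exact Prod.ext this (Prod.ext e2 e3)
  have h1c : s1.card ≤ (TriSet (g-2)).card := by
    apply Finset.card_le_card_of_injOn (fun t => (t.1 - 1, t.2.1.erase t.1, t.2.2))
    · intro t ht
      simp only [hs1, Finset.mem_coe, Finset.mem_filter] at ht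
      obtain ⟨ht, hma, hnb⟩ := ht
      rw [Finset.mem_coe]; rw [mem_TriSet] at ht ⊢
      dsimp only
      have hcard : (t.2.1.erase t.1).card = t.2.1.card - 1 := Finset.card_erase_of_mem hma
      have hApos : 1 ≤ t.2.1.card := Finset.card_pos.mpr ⟨t.1, hma⟩ 
      have hn : 1 ≤ t.1 := by
        have := ht.2.1 hma; simp only [Finset.mem_Icc] at this; omega
      refine ⟨?_, ?_, ?_⟩
      · intro x hx
        simp only [Finset.mem_erase]
        exact ⟨fun h => hnb (h ▸ hx), ht.1 hx⟩
      · intro x hx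
        simp only [Finset.mem_erase] at hx
        have := ht.2.1 hx.2
        simp only [Finset.mem_Icc] at this ⊢
        have := hx.1
        constructor <;> omega
      · rw [hcard]
        have := ht.2.2; omega
    · intro t ht t' ht' h
      simp only [hs1, Finset.mem_coe, Finset.mem_filter] at ht ht'
      have hn : 1 ≤ t.1 := by
        have := (mem_TriSet.mp ht.1).2.1 ht.2.1; simp only [Finset.mem_Icc] at this; omega
      have hn' : 1 ≤ t'.1 := by
        have := (mem_TriSet.mp ht'.1).2.1 ht'.2.1; simp only [Finset.mem_Icc] at this; omega
      simp only [Prod.mk.injEq] at h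
      obtain ⟨e1, e2, e3⟩ := h
      have ent : t.1 = t'.1 := by omega
      have eA : t.2.1 = t'.2.1 := by
        rw [← Finset.insert_erase ht.2.1, ← Finset.insert_erase ht'.2.1, e2, ent]
      exact Prod.ext ent (Prod.ext eA e3)
  have h2c : s2.card ≤ (TriSet (g-3)).card := by
    apply Finset.card_le_card_of_injOn (fun t => (t.1 - 1, t.2.1.erase t.1, t.2.2.erase t.1))
    · intro t ht
      simp only [hs2, Finset.mem_coe, Finset.mem_filter] at ht
      obtain ⟨ht, hmb⟩ := ht
      rw [Finset.mem_coe]; rw [mem_TriSet] at ht ⊢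
      have hma : t.1 ∈ t.2.1 := ht.1 hmb
      have hcA : (t.2.1.erase t.1).card = t.2.1.card - 1 := Finset.card_erase_of_mem hma
      have hcB : (t.2.2.erase t.1).card = t.2.2.card - 1 := Finset.card_erase_of_mem hmb
      have hApos : 1 ≤ t.2.1.card := Finset.card_pos.mpr ⟨t.1, hma⟩
      have hBpos : 1 ≤ t.2.2.card := Finset.card_pos.mpr ⟨t.1, hmb⟩
      have hn : 1 ≤ t.1 := by
        have := ht.2.1 hma; simp only [Finset.mem_Icc] at this; omega
      refine ⟨?_, ?_, ?_⟩
      · intro x hx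
        simp only [Finset.mem_erase] at hx ⊢
        exact ⟨hx.1, ht.1 hx.2⟩
      · intro x hx
        simp only [Finset.mem_erase] at hx
        have := ht.2.1 hx.2
        simp only [Finset.mem_Icc] at this ⊢
        have := hx.1
        constructor <;> omega
      · rw [hcA, hcB]
        dsimp only
        have := ht.2.2; omega
    · intro t ht t' ht' h
      simp only [hs2, Finset.mem_coe, Finset.mem_filter] at ht ht'
      have hma : t.1 ∈ t.2.1 := (mem_TriSet.mp ht.1).1 ht.2
      have hma' : t'.1 ∈ t'.2.1 := (mem_TriSet.mp ht'.1).1 ht'.2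
      have hn : 1 ≤ t.1 := by
        have := (mem_TriSet.mp ht.1).2.1 hma; simp only [Finset.mem_Icc] at this; omega
      have hn' : 1 ≤ t'.1 := by
        have := (mem_TriSet.mp ht'.1).2.1 hma'; simp only [Finset.mem_Icc] at this; omega
      simp only [Prod.mk.injEq] at h
      obtain ⟨e1, e2, e3⟩ := h
      have ent : t.1 = t'.1 := by omega
      have eA : t.2.1 = t'.2.1 := by
        rw [← Finset.insert_erase hma, ← Finset.insert_erase hma', e2, ent]
      have eB : t.2.2 = t'.2.2 := by
        rw [← Finset.insert_erase ht.2, ← Finset.insert_erase ht'.2, e3, ent]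
      exact Prod.ext ent (Prod.ext eA eB)
  calc (TriSet g).card ≤ (s0 ∪ s1 ∪ s2).card := Finset.card_le_card hcover
    _ ≤ (s0 ∪ s1).card + s2.card := Finset.card_union_le _ _
    _ ≤ s0.card + s1.card + s2.card := by
        have := Finset.card_union_le s0 s1; omega
    _ ≤ _ := by omega

lemma tri_card_le (g : ℕ) : (TriSet g).card ≤ trib (g+1) := by
  induction g using Nat.strong_induction_on with
  | _ g ih =>
    match g, ih with
    | 0, _ => decide
    | 1, _ => decide
    | 2, _ => decide
    | (k+3), ih =>
      have h : (TriSet (k+3)).card ≤ (TriSet (k+2)).card + (TriSet (k+1)).card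
          + (TriSet k).card := tri_card_rec (k+3) (by omega)
      have h1 : (TriSet (k+2)).card ≤ trib (k+3) := ih (k+2) (by omega)
      have h2 : (TriSet (k+1)).card ≤ trib (k+2) := ih (k+1) (by omega)
      have h3 : (TriSet k).card ≤ trib (k+1) := ih k (by omega)
      have ht : trib (k+3+1) = trib (k+3) + trib (k+2) + trib (k+1) := rfl
      omega

def LowSet (g : ℕ) : Finset (ℕ × Finset ℕ × Finset ℕ) :=
  (TriSet g).filter (fun t => t.2.2 = ∅ ∨ t.2.2 = {1})

lemma low_card_rec (g : ℕ) (hg : 5 ≤ g) :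
    (LowSet (g-1)).card + (LowSet (g-2)).card ≤ (LowSet g).card := by
  classical
  set u1 := (LowSet (g-1)).image (fun t : ℕ × Finset ℕ × Finset ℕ => (t.1 + 1, t.2.1, t.2.2))
    with hu1
  set u2 := (LowSet (g-2)).image
    (fun t : ℕ × Finset ℕ × Finset ℕ => (t.1 + 1, insert (t.1+1) t.2.1, t.2.2)) with hu2
  have key1 : ∀ t ∈ LowSet (g-1), (t.1 + 1, t.2.1, t.2.2) ∈ LowSet g ∧ t.1 + 1 ∉ t.2.1 := by
    intro t ht
    simp only [LowSet, Finset.mem_filter] at ht ⊢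
    obtain ⟨ht, hB⟩ := ht
    rw [mem_TriSet] at ht
    have hnotin : t.1 + 1 ∉ t.2.1 := by
      intro h
      have := ht.2.1 h
      simp only [Finset.mem_Icc] at this
      omega
    refine ⟨⟨?_, ?_⟩, hnotin⟩
    · rw [mem_TriSet]
      dsimp only
      refine ⟨ht.1, ?_, ?_⟩
      · intro x hx
        have := ht.2.1 hx
        simp only [Finset.mem_Icc] at this ⊢
        omega
      · have := ht.2.2; omega
    · exact hB
  have key2 : ∀ t ∈ LowSet (g-2),
      (t.1 + 1, insert (t.1+1) t.2.1, t.2.2) ∈ LowSet g ∧ t.1 + 1 ∉ t.2.1 := by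
    intro t ht
    simp only [LowSet, Finset.mem_filter] at ht ⊢
    obtain ⟨ht, hB⟩ := ht
    rw [mem_TriSet] at ht
    have hnotin : t.1 + 1 ∉ t.2.1 := by
      intro h
      have := ht.2.1 h
      simp only [Finset.mem_Icc] at this
      omega
    refine ⟨⟨?_, ?_⟩, hnotin⟩
    · rw [mem_TriSet]
      dsimp only
      refine ⟨?_, ?_, ?_⟩
      · intro x hx; exact Finset.mem_insert_of_mem (ht.1 hx)
      · intro x hx
        rcases Finset.mem_insert.mp hx with h | h
        · simp [h]
        · have := ht.2.1 h
          simp only [Finset.mem_Icc] at this ⊢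
          omega
      · rw [Finset.card_insert_of_notMem hnotin]
        have := ht.2.2; omega
    · exact hB
  have hsub : u1 ∪ u2 ⊆ LowSet g := by
    intro t ht
    rcases Finset.mem_union.mp ht with h | h
    · obtain ⟨s, hs, rfl⟩ := Finset.mem_image.mp h
      exact (key1 s hs).1
    · obtain ⟨s, hs, rfl⟩ := Finset.mem_image.mp h
      exact (key2 s hs).1
  have hdisj : Disjoint u1 u2 := by
    rw [Finset.disjoint_left]
    intro t ht1 ht2
    obtain ⟨s, hs, rfl⟩ := Finset.mem_image.mp ht1
    obtain ⟨s', hs', he⟩ := Finset.mem_image.mp ht2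
    have h1 : s.1 + 1 ∉ s.2.1 := (key1 s hs).2
    have e1 : s'.1 + 1 = s.1 + 1 := congrArg Prod.fst he
    have e2 : insert (s'.1+1) s'.2.1 = s.2.1 := congrArg (fun t : ℕ × Finset ℕ × Finset ℕ => t.2.1) he
    apply h1
    rw [← e2, ← e1]
    exact Finset.mem_insert_self _ _
  have hc1 : u1.card = (LowSet (g-1)).card := by
    apply Finset.card_image_of_injOn
    intro t ht t' ht' h
    simp only [Prod.mk.injEq] at h
    exact Prod.ext (by omega) (Prod.ext h.2.1 h.2.2)
  have hc2 : u2.card = (LowSet (g-2)).card := by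
    apply Finset.card_image_of_injOn
    intro t ht t' ht' h
    simp only [Finset.mem_coe] at ht ht'
    have h1 : t.1 + 1 ∉ t.2.1 := (key2 t ht).2
    have h1' : t'.1 + 1 ∉ t'.2.1 := (key2 t' ht').2
    simp only [Prod.mk.injEq] at h
    obtain ⟨e1, e2, e3⟩ := h
    have ent : t.1 = t'.1 := by omega
    have eA : t.2.1 = t'.2.1 := by
      rw [ent] at e2 h1
      have := congrArg (fun s => Finset.erase s (t'.1+1)) e2
      simpa [Finset.erase_insert h1, Finset.erase_insert h1'] using this
    exact Prod.ext ent (Prod.ext eA e3)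
  calc (LowSet (g-1)).card + (LowSet (g-2)).card = u1.card + u2.card := by rw [hc1, hc2]
    _ = (u1 ∪ u2).card := (Finset.card_union_of_disjoint hdisj).symm
    _ ≤ (LowSet g).card := Finset.card_le_card hsub

lemma low_card_ge (g : ℕ) (hg : 3 ≤ g) : 2 * Nat.fib g ≤ (LowSet g).card := by
  induction g using Nat.strong_induction_on with
  | _ g ih =>
    match g, ih, hg with
    | 3, _, _ => decide
    | 4, _, _ => decide
    | (k+5), ih, _ =>
      have h : (LowSet (k+4)).card + (LowSet (k+3)).card ≤ (LowSet (k+5)).card :=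
        low_card_rec (k+5) (by omega)
      have h1 : 2 * Nat.fib (k+4) ≤ (LowSet (k+4)).card := ih (k+4) (by omega) (by omega)
      have h2 : 2 * Nat.fib (k+3) ≤ (LowSet (k+3)).card := ih (k+3) (by omega) (by omega)
      have hf : Nat.fib (k+5) = Nat.fib (k+3) + Nat.fib (k+4) := Nat.fib_add_two
      omega

lemma gmult_set_nonempty (G : Finset ℕ) : {m : ℕ | 0 < m ∧ m ∉ G}.Nonempty := by
  refine ⟨G.sup id + 1, Nat.succ_pos _, fun h => ?_⟩
  have := Finset.le_sup (f := id) h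
  simp only [id] at this
  omega

lemma gmult_pos (G : Finset ℕ) : 0 < gmult G := (Nat.sInf_mem (gmult_set_nonempty G)).1

lemma gmult_not_mem (G : Finset ℕ) : gmult G ∉ G := (Nat.sInf_mem (gmult_set_nonempty G)).2

lemma gmult_le {G : Finset ℕ} {x : ℕ} (hx : 0 < x) (h : x ∉ G) : gmult G ≤ x :=
  Nat.sInf_le ⟨hx, h⟩

lemma mem_of_lt_gmult {G : Finset ℕ} {x : ℕ} (hx : 0 < x) (h : x < gmult G) : x ∈ G := by
  by_contra hc
  have := gmult_le hx hc
  omega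

lemma gmult_eq {G : Finset ℕ} {m : ℕ} (h0 : 0 < m) (h1 : m ∉ G)
    (h2 : ∀ k, 0 < k → k < m → k ∈ G) : gmult G = m := by
  have hle : gmult G ≤ m := gmult_le h0 h1
  have hmem : 0 < gmult G ∧ gmult G ∉ G := ⟨gmult_pos G, gmult_not_mem G⟩
  by_contra h
  exact hmem.2 (h2 _ hmem.1 (by omega))

lemma lt_gcond {G : Finset ℕ} {x : ℕ} (hx : x ∈ G) : x < gcond G := by
  unfold gcond
  rw [dif_pos ⟨x, hx⟩]
  have := Finset.le_max' G x hx
  omega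

lemma gcond_le_of_depth {G : Finset ℕ} (hd : gdepth G ≤ 3) : gcond G ≤ 3 * gmult G := by
  have hm := gmult_pos G
  unfold gdepth at hd
  have h4 : (gcond G + gmult G - 1) / gmult G < 4 := by omega
  have := (Nat.div_lt_iff_lt_mul hm).mp h4
  omega

lemma gdepth_le_of {G : Finset ℕ} (hc : gcond G ≤ 3 * gmult G) : gdepth G ≤ 3 := by
  have hm := gmult_pos G
  unfold gdepth
  have := (Nat.div_lt_iff_lt_mul hm).mpr (show gcond G + gmult G - 1 < 4 * gmult G by omega)
  omega

def psiF (n : ℕ) (A B : Finset ℕ) : Finset ℕ :=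
  Finset.Icc 1 n ∪ A.image (fun a => a + (n+1)) ∪ B.image (fun b => b + (2*n+2))

noncomputable def phiF (G : Finset ℕ) : ℕ × Finset ℕ × Finset ℕ :=
  (gmult G - 1,
   (G.filter (fun x => gmult G < x ∧ x < 2*gmult G)).image (fun x => x - gmult G),
   (G.filter (fun x => 2*gmult G < x)).image (fun x => x - 2*gmult G))

lemma mem_psiF {n : ℕ} {A B : Finset ℕ} {x : ℕ} :
    x ∈ psiF n A B ↔ (1 ≤ x ∧ x ≤ n) ∨ (∃ a ∈ A, a + (n+1) = x) ∨
      (∃ b ∈ B, b + (2*n+2) = x) := by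
  simp [psiF, Finset.mem_union, Finset.mem_image, Finset.mem_Icc, or_assoc]

lemma psiF_small {n : ℕ} {A B : Finset ℕ} {x : ℕ} (h1 : 1 ≤ x) (h2 : x ≤ n) :
    x ∈ psiF n A B := mem_psiF.mpr (Or.inl ⟨h1, h2⟩)

lemma psiF_gapset {n : ℕ} {A B : Finset ℕ} (hA : A ⊆ Finset.Icc 1 n) (hBA : B ⊆ A)
    (hB1 : ∀ b ∈ B, b = 1) : IsGapset (psiF n A B) := by
  constructor
  · intro x hx
    rcases mem_psiF.mp hx with ⟨h1, _⟩ | ⟨a, _, rfl⟩ | ⟨b, _, rfl⟩ <;> omega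
  · intro z hz x y hx hy hxy
    rcases mem_psiF.mp hz with ⟨h1, h2⟩ | ⟨a, ha, rfl⟩ | ⟨b, hb, rfl⟩
    · exact Or.inl (psiF_small hx (by omega))
    · have haI := hA ha
      rw [Finset.mem_Icc] at haI
      by_cases hxn : x ≤ n
      · exact Or.inl (psiF_small hx hxn)
      · exact Or.inr (psiF_small hy (by omega))
    · have hb1 : b = 1 := hB1 b hb
      have h1A : 1 ∈ A := by have := hBA hb; rwa [hb1] at this
      have hm2 : n + 2 ∈ psiF n A B := mem_psiF.mpr (Or.inr (Or.inl ⟨1, h1A, by omega⟩))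
      by_cases hxn : x ≤ n
      · exact Or.inl (psiF_small hx hxn)
      by_cases hyn : y ≤ n
      · exact Or.inr (psiF_small hy hyn)
      have : x = n + 2 ∨ y = n + 2 := by omega
      rcases this with h | h
      · exact Or.inl (h ▸ hm2)
      · exact Or.inr (h ▸ hm2)

lemma psiF_card {n : ℕ} {A B : Finset ℕ} (hA : A ⊆ Finset.Icc 1 n) (hBA : B ⊆ A) :
    (psiF n A B).card = n + A.card + B.card := by
  have hd1 : Disjoint (Finset.Icc 1 n) (A.image (fun a => a + (n+1))) := by
    rw [Finset.disjoint_left]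
    intro x hx hx'
    rw [Finset.mem_Icc] at hx
    obtain ⟨a, _, rfl⟩ := Finset.mem_image.mp hx'
    omega
  have hd2 : Disjoint (Finset.Icc 1 n ∪ A.image (fun a => a + (n+1)))
      (B.image (fun b => b + (2*n+2))) := by
    rw [Finset.disjoint_left]
    intro x hx hx'
    obtain ⟨b, _, rfl⟩ := Finset.mem_image.mp hx'
    rcases Finset.mem_union.mp hx with h | h
    · rw [Finset.mem_Icc] at h; omega
    · obtain ⟨a, haA, he⟩ := Finset.mem_image.mp h
      have := hA haA
      rw [Finset.mem_Icc] at this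
      omega
  have hiA : (A.image (fun a => a + (n+1))).card = A.card :=
    Finset.card_image_of_injective _ (fun a b h => by omega)
  have hiB : (B.image (fun b => b + (2*n+2))).card = B.card :=
    Finset.card_image_of_injective _ (fun a b h => by omega)
  rw [psiF, Finset.card_union_of_disjoint hd2, Finset.card_union_of_disjoint hd1,
    Nat.card_Icc, hiA, hiB]
  omega

lemma psiF_gmult {n : ℕ} {A B : Finset ℕ} (hA : A ⊆ Finset.Icc 1 n) :
    gmult (psiF n A B) = n + 1 := by
  apply gmult_eq (by omega)
  · intro h
    rcases mem_psiF.mp h with ⟨_, h2⟩ | ⟨a, ha, he⟩ | ⟨b, _, he⟩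
    · omega
    · have := hA ha; rw [Finset.mem_Icc] at this; omega
    · omega
  · intro k hk hk'
    exact psiF_small hk (by omega)

lemma psiF_depth {n : ℕ} {A B : Finset ℕ} (hn : 1 ≤ n) (hA : A ⊆ Finset.Icc 1 n)
    (hBA : B ⊆ A) : gdepth (psiF n A B) ≤ 3 := by
  apply gdepth_le_of
  rw [psiF_gmult hA]
  have hne : (psiF n A B).Nonempty := ⟨1, psiF_small le_rfl hn⟩
  unfold gcond
  rw [dif_pos hne]
  have : (psiF n A B).max' hne ≤ 3*n + 2 := by
    apply Finset.max'_le
    intro x hx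
    rcases mem_psiF.mp hx with ⟨_, h2⟩ | ⟨a, ha, rfl⟩ | ⟨b, hb, rfl⟩
    · omega
    · have := hA ha; rw [Finset.mem_Icc] at this; omega
    · have := hA (hBA hb); rw [Finset.mem_Icc] at this; omega
  omega

lemma image_sub_add (S : Finset ℕ) (k : ℕ) (h : ∀ x ∈ S, k ≤ x) :
    (S.image (fun x => x - k)).image (fun y => y + k) = S := by
  ext z
  simp only [Finset.mem_image]
  constructor
  · rintro ⟨y, ⟨x, hx, rfl⟩, rfl⟩
    have := h x hx
    rwa [Nat.sub_add_cancel this]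
  · intro hz
    exact ⟨z - k, ⟨z, hz, rfl⟩, Nat.sub_add_cancel (h z hz)⟩

lemma image_add_sub (S : Finset ℕ) (k : ℕ) :
    (S.image (fun x => x + k)).image (fun y => y - k) = S := by
  rw [Finset.image_image]
  have : ((fun y => y - k) ∘ (fun x => x + k)) = id := funext fun a => by simp
  rw [this, Finset.image_id]

lemma phiF_psiF {n : ℕ} {A B : Finset ℕ} (hA : A ⊆ Finset.Icc 1 n) (hBA : B ⊆ A) :
    phiF (psiF n A B) = (n, A, B) := by
  have hm : gmult (psiF n A B) = n + 1 := psiF_gmult hA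
  unfold phiF
  rw [hm]
  have hfA : (psiF n A B).filter (fun x => n+1 < x ∧ x < 2*(n+1)) =
      A.image (fun a => a + (n+1)) := by
    ext x
    simp only [Finset.mem_filter, mem_psiF, Finset.mem_image]
    constructor
    · rintro ⟨h, hlt, hgt⟩
      rcases h with ⟨h1, h2⟩ | ⟨a, ha, rfl⟩ | ⟨b, hb, rfl⟩
      · omega
      · exact ⟨a, ha, rfl⟩
      · omega
    · rintro ⟨a, ha, rfl⟩
      have := hA ha; rw [Finset.mem_Icc] at this
      exact ⟨Or.inr (Or.inl ⟨a, ha, rfl⟩), by omega, by omega⟩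
  have hfB : (psiF n A B).filter (fun x => 2*(n+1) < x) =
      B.image (fun b => b + (2*n+2)) := by
    ext x
    simp only [Finset.mem_filter, mem_psiF, Finset.mem_image]
    constructor
    · rintro ⟨h, hgt⟩
      rcases h with ⟨h1, h2⟩ | ⟨a, ha, rfl⟩ | ⟨b, hb, rfl⟩
      · omega
      · have := hA ha; rw [Finset.mem_Icc] at this; omega
      · exact ⟨b, hb, rfl⟩
    · rintro ⟨b, hb, rfl⟩
      have := hA (hBA hb); rw [Finset.mem_Icc] at this
      exact ⟨Or.inr (Or.inr ⟨b, hb, rfl⟩), by omega⟩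
  refine Prod.ext (by omega) (Prod.ext ?_ ?_)
  · dsimp only
    rw [hfA]
    have : (fun x => x - (n+1)) = (fun x => x - (n+1)) := rfl
    rw [image_add_sub]
  · dsimp only
    have h22 : 2*(n+1) = 2*n+2 := by ring
    rw [hfB]
    rw [h22] at hfB ⊢
    rw [image_add_sub]

lemma gapset_decode {G : Finset ℕ} (hG : IsGapset G) (hne : G.Nonempty)
    (hd : gdepth G ≤ 3) :
    phiF G ∈ TriSet G.card ∧ psiF (phiF G).1 (phiF G).2.1 (phiF G).2.2 = G := by
  set m := gmult G with hmdef
  have hm0 : 0 < m := gmult_pos G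
  have hmG : m ∉ G := gmult_not_mem G
  have h2m : 2*m ∉ G := by
    intro h
    rcases hG.2 _ h m m hm0 hm0 (by ring) with h' | h' <;> exact hmG h'
  have hlt3 : ∀ x ∈ G, x < 3*m := by
    intro x hx
    have h1 := lt_gcond hx
    have h2 := gcond_le_of_depth hd
    omega
  have hsm : ∀ x, 0 < x → x < m → x ∈ G := fun x h1 h2 => mem_of_lt_gmult h1 h2
  have hpart : G = Finset.Icc 1 (m-1) ∪ G.filter (fun x => m < x ∧ x < 2*m) ∪
      G.filter (fun x => 2*m < x) := by
    ext x
    simp only [Finset.mem_union, Finset.mem_Icc, Finset.mem_filter]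
    constructor
    · intro hx
      have h0 := hG.1 x hx
      have h3 := hlt3 x hx
      have hxm : x ≠ m := fun e => hmG (e ▸ hx)
      have hx2 : x ≠ 2*m := fun e => h2m (e ▸ hx)
      rcases show (1 ≤ x ∧ x ≤ m-1) ∨ (m < x ∧ x < 2*m) ∨ (2*m < x) by omega with h|h|h
      · exact Or.inl (Or.inl h)
      · exact Or.inl (Or.inr ⟨hx, h⟩)
      · exact Or.inr ⟨hx, h⟩
    · rintro ((⟨h1, h2⟩ | ⟨h, _⟩) | ⟨h, _⟩)
      · exact hsm x (by omega) (by omega)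
      · exact h
      · exact h
  have hdisj1 : Disjoint (Finset.Icc 1 (m-1)) (G.filter (fun x => m < x ∧ x < 2*m)) := by
    rw [Finset.disjoint_left]
    intro x hx hx'
    rw [Finset.mem_Icc] at hx
    rw [Finset.mem_filter] at hx'
    omega
  have hdisj2 : Disjoint (Finset.Icc 1 (m-1) ∪ G.filter (fun x => m < x ∧ x < 2*m))
      (G.filter (fun x => 2*m < x)) := by
    rw [Finset.disjoint_left]
    intro x hx hx'
    rw [Finset.mem_filter] at hx'
    rcases Finset.mem_union.mp hx with h | h
    · rw [Finset.mem_Icc] at h; omega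
    · rw [Finset.mem_filter] at h; omega
  have hcard : G.card = (m-1) + (G.filter (fun x => m < x ∧ x < 2*m)).card +
      (G.filter (fun x => 2*m < x)).card := by
    conv_lhs => rw [hpart]
    rw [Finset.card_union_of_disjoint hdisj2, Finset.card_union_of_disjoint hdisj1,
      Nat.card_Icc]
    omega
  have hcA : ((G.filter (fun x => m < x ∧ x < 2*m)).image (fun x => x - m)).card =
      (G.filter (fun x => m < x ∧ x < 2*m)).card := by
    apply Finset.card_image_of_injOn
    intro x hx y hy h
    simp only [Finset.mem_coe, Finset.mem_filter] at hx hy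
    dsimp only at h
    omega
  have hcB : ((G.filter (fun x => 2*m < x)).image (fun x => x - 2*m)).card =
      (G.filter (fun x => 2*m < x)).card := by
    apply Finset.card_image_of_injOn
    intro x hx y hy h
    simp only [Finset.mem_coe, Finset.mem_filter] at hx hy
    dsimp only at h
    omega
  have hBsubA : (phiF G).2.2 ⊆ (phiF G).2.1 := by
    unfold phiF
    dsimp only
    rw [← hmdef]
    intro b hb
    simp only [Finset.mem_image, Finset.mem_filter] at hb ⊢
    obtain ⟨x, ⟨hxG, hx2m⟩, rfl⟩ := hb
    have hx3 := hlt3 x hxG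
    rcases hG.2 x hxG m (x - m) hm0 (by omega) (by omega) with h | h
    · exact absurd h hmG
    · exact ⟨x - m, ⟨h, by omega, by omega⟩, by omega⟩
  have hAIcc : (phiF G).2.1 ⊆ Finset.Icc 1 ((phiF G).1) := by
    unfold phiF
    dsimp only
    rw [← hmdef]
    intro a ha
    simp only [Finset.mem_image, Finset.mem_filter] at ha
    obtain ⟨x, ⟨hxG, hx1, hx2⟩, rfl⟩ := ha
    rw [Finset.mem_Icc]
    omega
  have hsum : (phiF G).1 + (phiF G).2.1.card + (phiF G).2.2.card = G.card := by
    unfold phiF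
    dsimp only
    rw [← hmdef, hcA, hcB]
    omega
  constructor
  · rw [mem_TriSet]
    exact ⟨hBsubA, hAIcc, hsum⟩
  · unfold phiF
    dsimp only
    rw [← hmdef]
    unfold psiF
    have hm1 : (m - 1) + 1 = m := by omega
    have hm2 : 2*(m-1) + 2 = 2*m := by omega
    rw [hm1, hm2]
    rw [image_sub_add _ m (by intro x hx; rw [Finset.mem_filter] at hx; omega)]
    rw [image_sub_add _ (2*m) (by intro x hx; rw [Finset.mem_filter] at hx; omega)]
    exact hpart.symm

theorem stmt15 (g : ℕ) (hg : 3 ≤ g) :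
    2 * Nat.fib g ≤ n' g ∧ n' g ≤ trib (g + 1) := by
  classical
  have hdec : ∀ G : {G : Finset ℕ // IsGapset G ∧ G.card = g ∧ gdepth G ≤ 3},
      phiF G.1 ∈ TriSet g ∧ psiF (phiF G.1).1 (phiF G.1).2.1 (phiF G.1).2.2 = G.1 := by
    intro G
    have hne : G.1.Nonempty := Finset.card_pos.mp (by rw [G.2.2.1]; omega)
    have := gapset_decode G.2.1 hne G.2.2.2
    rwa [G.2.2.1] at this
  let f : {G : Finset ℕ // IsGapset G ∧ G.card = g ∧ gdepth G ≤ 3} → ↥(TriSet g) :=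
    fun G => ⟨phiF G.1, (hdec G).1⟩
  have hf : Function.Injective f := by
    intro G G' h
    apply Subtype.ext
    have h' : phiF G.1 = phiF G'.1 := congrArg Subtype.val h
    rw [← (hdec G).2, ← (hdec G').2, h']
  haveI : Finite {G : Finset ℕ // IsGapset G ∧ G.card = g ∧ gdepth G ≤ 3} :=
    Finite.of_injective f hf
  have key : ∀ t ∈ LowSet g, IsGapset (psiF t.1 t.2.1 t.2.2) ∧
      (psiF t.1 t.2.1 t.2.2).card = g ∧ gdepth (psiF t.1 t.2.1 t.2.2) ≤ 3 ∧
      phiF (psiF t.1 t.2.1 t.2.2) = t := by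
    intro t ht
    rw [LowSet, Finset.mem_filter] at ht
    obtain ⟨htT, hB⟩ := ht
    have hn : 1 ≤ t.1 := n_pos_of_mem htT (by omega)
    rw [mem_TriSet] at htT
    obtain ⟨hBA, hA, hsum⟩ := htT
    have hB1 : ∀ b ∈ t.2.2, b = 1 := by
      rcases hB with h | h <;> intro b hb <;> rw [h] at hb
      · exact absurd hb (Finset.notMem_empty b)
      · exact Finset.mem_singleton.mp hb
    refine ⟨psiF_gapset hA hBA hB1, ?_, psiF_depth hn hA hBA, ?_⟩
    · rw [psiF_card hA hBA]; omega
    · exact phiF_psiF hA hBA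
  let e : ↥(LowSet g) → {G : Finset ℕ // IsGapset G ∧ G.card = g ∧ gdepth G ≤ 3} :=
    fun t => ⟨psiF t.1.1 t.1.2.1 t.1.2.2,
      (key t.1 t.2).1, (key t.1 t.2).2.1, (key t.1 t.2).2.2.1⟩
  have he : Function.Injective e := by
    intro t t' h
    have h' : psiF t.1.1 t.1.2.1 t.1.2.2 = psiF t'.1.1 t'.1.2.1 t'.1.2.2 :=
      congrArg Subtype.val h
    apply Subtype.ext
    rw [← (key t.1 t.2).2.2.2, ← (key t'.1 t'.2).2.2.2, h']
  have hl : 2 * Nat.fib g ≤ Nat.card {G : Finset ℕ // IsGapset G ∧ G.card = g ∧ gdepth G ≤ 3} := by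
    have h1 := Nat.card_le_card_of_injective e he
    rw [Nat.card_eq_finsetCard] at h1
    exact le_trans (low_card_ge g hg) h1
  have hu : Nat.card {G : Finset ℕ // IsGapset G ∧ G.card = g ∧ gdepth G ≤ 3} ≤ trib (g+1) := by
    have h1 := Nat.card_le_card_of_injective f hf
    rw [Nat.card_eq_finsetCard] at h1
    exact le_trans h1 (tri_card_le g)
  exact ⟨hl, hu⟩
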